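/- Under the original charging scheme, for every horizon T, ℐ − 𝒪 ≥ 0: the number of charges given, after the request at time T, by pages not then in A's cache is at most the number of pages outside the initial cache that were requested at some time t ≤ T. -/
import Mathlib


open Finset
open scoped Classical

/-! ## The original Lund–Phillips–Reingold charging scheme

We fix an infinite request sequence and fixed runs of an online paging policy `A`
and of an online policy `OPT` on it, both from the same initial cache of size `k`.
Each page `p` carries a value `chg p ∈ Option Page` (`none` = no charge given);
`p` gives a charge to the page `chg p` when `chg p ≠ none`, and that page bears it.
When a page `s` is requested at time `t` the charges are updated in order:
(1) `c(s) := none`;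
(2) if `A` misses and evicts `p`: if `p` is not in `OPT`'s cache just after the
request then `c(p) := p`, otherwise `c(p) := q` for a page `q` of `A`'s cache just
before the request, outside `OPT`'s cache just after it, bearing no charge from any
page of `OPT⁺ \ A⁻`;
(3) if `OPT` evicts `p` then `c(p) := p`. -/

/-- One step of a paging run: on a hit nothing happens, on a miss some cached page `p`
is evicted and the requested page brought in. -/
def CacheStep {Page : Type} [DecidableEq Page] (s : Page) (C C' : Finset Page)
    (ev : Option Page) : Prop :=
  (s ∈ C ∧ ev = none ∧ C' = C) ∨
    (s ∉ C ∧ ∃ p ∈ C, ev = some p ∧ C' = insert s (C.erase p))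

/-- Step (1) of the original scheme: when `s` is requested, clear the charge that `s`
gives. -/
def clearStepOrig {Page : Type} [DecidableEq Page] (s : Page)
    (c : Page → Option Page) : Page → Option Page :=
  fun x => if x = s then none else c x

/-- Step (2): if `A` evicted `p` (cache `CA` just before the request, `OPT`'s cache
`CO` just after it), assign `p`'s charge. -/
def AStep {Page : Type} [DecidableEq Page] (CA CO : Finset Page) (ev : Option Page)
    (c c' : Page → Option Page) : Prop :=
  match ev with
  | none => c' = c
  | some p =>
      (p ∉ CO ∧ c' = Function.update c p (some p)) ∨
        (p ∈ CO ∧ ∃ q ∈ CA, q ∉ CO ∧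
          (∀ x ∈ CO, x ∉ CA → c x ≠ some q) ∧
          c' = Function.update c p (some q))

/-- Step (3): if `OPT` evicted `p`, set `c(p) := p`. -/
def optStep {Page : Type} [DecidableEq Page] (ev : Option Page)
    (c : Page → Option Page) : Page → Option Page :=
  match ev with
  | none => c
  | some p => Function.update c p (some p)

/-- A joint run of the request sequence, of the two paging algorithms `A` and `OPT`
(started from the same initial cache of size `k`), and of the original charging scheme.
`req t` is the page requested at time `t`; `cacheA t`, `cacheOpt t` and `chg t` are the
caches and the charge function just before that request; `evA t`, `evOpt t` are the
pages evicted at time `t` (if any). -/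
structure OrigChargingRun (Page : Type) [DecidableEq Page] where
  k : ℕ
  req : ℕ → Page
  cacheA : ℕ → Finset Page
  cacheOpt : ℕ → Finset Page
  evA : ℕ → Option Page
  evOpt : ℕ → Option Page
  chg : ℕ → Page → Option Page
  init_card : (cacheA 0).card = k
  init_eq : cacheOpt 0 = cacheA 0
  chg_init : ∀ p, chg 0 p = none
  stepA : ∀ t, CacheStep (req t) (cacheA t) (cacheA (t + 1)) (evA t)
  stepOpt : ∀ t, CacheStep (req t) (cacheOpt t) (cacheOpt (t + 1)) (evOpt t)
  chg_step : ∀ t, ∃ c₂, AStep (cacheA t) (cacheOpt (t + 1)) (evA t)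
      (clearStepOrig (req t) (chg t)) c₂ ∧ chg (t + 1) = optStep (evOpt t) c₂

variable {Page : Type} [DecidableEq Page] [Fintype Page]

/-- `ℐ` after `T` requests: the number of pages not in the initial cache requested at
some time `< T`. -/
def Icount (R : OrigChargingRun Page) (T : ℕ) : ℕ :=
  (((range T).image R.req) \ R.cacheA 0).card

/-- `𝒪` after `T` requests: the number of pages currently not in `A`'s cache that give
a charge. -/
def Ocount (R : OrigChargingRun Page) (T : ℕ) : ℕ :=
  (univ.filter fun p => p ∉ R.cacheA T ∧ R.chg T p ≠ none).card

lemma evict_mem {Page : Type} [DecidableEq Page] {s : Page} {C C' : Finset Page} {p : Page}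
    (h : CacheStep s C C' (some p)) : p ∈ C := by
  rcases h with ⟨_, h, _⟩ | ⟨_, q, hq, he, _⟩
  · simp at h
  · cases he; exact hq

lemma cacheA_card (R : OrigChargingRun Page) : ∀ T, (R.cacheA T).card = R.k := by
  intro T
  induction T with
  | zero => exact R.init_card
  | succ t ih =>
    rcases R.stepA t with ⟨_, _, hC⟩ | ⟨hs, p, hp, _, hC⟩
    · rw [hC]; exact ih
    · rw [hC, Finset.card_insert_of_notMem (fun hmem => hs (Finset.mem_of_mem_erase hmem)),
        Finset.card_erase_add_one hp]
      exact ih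

lemma cache_subset (req : ℕ → Page) (C : ℕ → Finset Page)
    (h : ∀ t, ∃ ev, CacheStep (req t) (C t) (C (t + 1)) ev) :
    ∀ T, C T ⊆ C 0 ∪ (range T).image req := by
  intro T
  induction T with
  | zero => simp
  | succ t ih =>
    have hmono : C 0 ∪ (range t).image req ⊆ C 0 ∪ (range (t + 1)).image req :=
      Finset.union_subset_union_right
        (Finset.image_subset_image (Finset.range_subset_range.2 (Nat.le_succ t)))
    obtain ⟨ev, hstep⟩ := h t
    rcases hstep with ⟨_, _, hC⟩ | ⟨_, p, hp, _, hC⟩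
    · rw [hC]; exact ih.trans hmono
    · rw [hC]
      intro x hx
      rcases Finset.mem_insert.1 hx with rfl | hx
      · exact Finset.mem_union_right _
          (Finset.mem_image.2 ⟨t, Finset.mem_range.2 (Nat.lt_succ_self t), rfl⟩)
      · exact hmono (ih (Finset.mem_of_mem_erase hx))

lemma chg_mem_subset (R : OrigChargingRun Page) :
    ∀ T p, R.chg T p ≠ none → p ∈ R.cacheA 0 ∪ (range T).image R.req := by
  intro T
  induction T with
  | zero => intro p hp; exact absurd (R.chg_init p) hp
  | succ t ih =>
    intro p hp
    have hmono : R.cacheA 0 ∪ (range t).image R.req ⊆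
        R.cacheA 0 ∪ (range (t + 1)).image R.req :=
      Finset.union_subset_union_right
        (Finset.image_subset_image (Finset.range_subset_range.2 (Nat.le_succ t)))
    have hreq : R.req t ∈ R.cacheA 0 ∪ (range (t + 1)).image R.req :=
      Finset.mem_union_right _
        (Finset.mem_image.2 ⟨t, Finset.mem_range.2 (Nat.lt_succ_self t), rfl⟩)
    have hAsub : R.cacheA t ⊆ R.cacheA 0 ∪ (range t).image R.req :=
      cache_subset R.req R.cacheA (fun u => ⟨R.evA u, R.stepA u⟩) t
    have hOsub : R.cacheOpt t ⊆ R.cacheA 0 ∪ (range t).image R.req := by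
      have := cache_subset R.req R.cacheOpt (fun u => ⟨R.evOpt u, R.stepOpt u⟩) t
      rwa [R.init_eq] at this
    obtain ⟨c₂, hA, hO⟩ := R.chg_step t
    rw [hO] at hp
    -- peel the OPT step
    have hc₂ : c₂ p ≠ none ∨ p ∈ R.cacheOpt t := by
      cases hev : R.evOpt t with
      | none => rw [hev] at hp; exact Or.inl hp
      | some p0 =>
        rw [hev] at hp
        by_cases hpp : p = p0
        · subst hpp
          have : R.evOpt t = some p := hev
          have hstep := R.stepOpt t
          rw [this] at hstep
          exact Or.inr (evict_mem hstep)
        · left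
          simpa [optStep, Function.update, hpp] using hp
    rcases hc₂ with hc₂ | hmem
    · -- peel the A step
      have hclear : (clearStepOrig (R.req t) (R.chg t)) p ≠ none ∨ p ∈ R.cacheA t := by
        cases hev : R.evA t with
        | none => rw [hev] at hA; rw [hA] at hc₂; exact Or.inl hc₂
        | some pA =>
          rw [hev] at hA
          by_cases hpp : p = pA
          · subst hpp
            have hstep := R.stepA t
            rw [hev] at hstep
            exact Or.inr (evict_mem hstep)
          · left
            rcases hA with ⟨_, hA⟩ | ⟨_, q, _, _, _, hA⟩ <;>
              (rw [hA] at hc₂; simpa [Function.update, hpp] using hc₂)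
      rcases hclear with hclear | hmem
      · have hne : p ≠ R.req t := by
          intro h; apply hclear; simp [clearStepOrig, h]
        have : R.chg t p ≠ none := by
          intro h; apply hclear; simp [clearStepOrig, hne, h]
        exact hmono (ih p this)
      · exact hmono (hAsub hmem)
    · exact hmono (hOsub hmem)

/-- **Claim (`ℐ − 𝒪 ≥ 0`).**  Under the original charging scheme, for every horizon
`T`, the number of charges given, after the first `T` requests, by pages not then in
`A`'s cache is at most the number of pages outside the initial cache requested at some
time `< T`. -/
theorem open_charges_le_new_pages (R : OrigChargingRun Page) (T : ℕ) :
    Ocount R T ≤ Icount R T := by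
  classical
  set C0 := R.cacheA 0 with hC0
  set CA := R.cacheA T with hCA
  set Img := (range T).image R.req with hImg
  set N := Img \ C0 with hN
  have hAsub : CA ⊆ C0 ∪ Img := cache_subset R.req R.cacheA (fun u => ⟨R.evA u, R.stepA u⟩) T
  have hsub : (univ.filter fun p => p ∉ CA ∧ R.chg T p ≠ none) ⊆ (C0 \ CA) ∪ (N \ CA) := by
    intro p hp
    rw [Finset.mem_filter] at hp
    have hmem := chg_mem_subset R T p hp.2.2
    rw [Finset.mem_union] at hmem ⊢
    rcases hmem with h | h
    · exact Or.inl (Finset.mem_sdiff.2 ⟨h, hp.2.1⟩)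
    · by_cases h0 : p ∈ C0
      · exact Or.inl (Finset.mem_sdiff.2 ⟨h0, hp.2.1⟩)
      · exact Or.inr (Finset.mem_sdiff.2 ⟨Finset.mem_sdiff.2 ⟨h, h0⟩, hp.2.1⟩)
  have hdisj : Disjoint (C0 \ CA) (N \ CA) := by
    rw [Finset.disjoint_left]
    intro a ha hb
    exact (Finset.mem_sdiff.1 (Finset.mem_sdiff.1 hb).1).2 (Finset.mem_sdiff.1 ha).1
  have hcards : (C0 \ CA).card = (CA \ C0).card :=
    Finset.card_sdiff_comm (by rw [hC0, hCA, R.init_card, cacheA_card])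
  have hsub2 : CA \ C0 ⊆ N ∩ CA := by
    intro x hx
    rw [Finset.mem_sdiff] at hx
    rcases Finset.mem_union.1 (hAsub hx.1) with h | h
    · exact absurd h hx.2
    · exact Finset.mem_inter.2 ⟨Finset.mem_sdiff.2 ⟨h, hx.2⟩, hx.1⟩
  calc Ocount R T ≤ ((C0 \ CA) ∪ (N \ CA)).card := Finset.card_le_card hsub
    _ = (C0 \ CA).card + (N \ CA).card := Finset.card_union_of_disjoint hdisj
    _ ≤ (N ∩ CA).card + (N \ CA).card := by
        rw [hcards]; exact Nat.add_le_add_right (Finset.card_le_card hsub2) _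
    _ = N.card := Finset.card_inter_add_card_sdiff N CA
    _ = Icount R T := rfl
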